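/- (Wells-type exact sequence for linear cycle sets) Let X be a linear cycle set, A an abelian group, and E = X ⊕_{f,g} A the central extension corresponding to a normalised 2-cocycle (f,g). Then there is an exact sequence 1 → Z¹_N(X;A) →ι Aut_A(E) →Ψ Aut(X) × Aut(A) →Θ H²_N(X;A), where Θ(φ,θ) = [f,g] − ^{(φ,θ)}[f,g], exactness at Aut(X)×Aut(A) means Im(Ψ) = Θ⁻¹{0}, and ι, Ψ are group homomorphisms with ι injective and Ker(Ψ) = Im(ι). -/

import Mathlib

/-!
Every element of `Aut_A(E)` is a shear `(x, a) ↦ (φ x, l x + θ a)`, and such a shear preserves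
the operations of `E` exactly when `(f, g)` minus its transport by `(φ, θ)` is the coboundary of
the normalised 1-cochain `l ∘ φ⁻¹` (normalised because `g 0 0 = 0`). For `φ = 1`, `θ = 1` this
says that the shears in the kernel of `Ψ` are those with `l ∈ Z¹_N(X;A)`; in general it says
that `(φ, θ)` lifts to `Aut_A(E)` if and only if `Θ(φ, θ) = 0`.
-/

/-- A (left) linear cycle set on an abelian group `X`. -/
structure LCS (X : Type*) [AddCommGroup X] where
  dot : X → X → X
  bij : ∀ x, Function.Bijective (dot x)
  cyc : ∀ x y z, dot (dot x y) (dot x z) = dot (dot y x) (dot y z)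
  dot_add : ∀ x y z, dot x (y + z) = dot x y + dot x z
  add_dot : ∀ x y z, dot (x + y) z = dot (dot x y) (dot x z)

/-- 2-cocycle conditions for a linear cycle set with coefficients in `A`. -/
def IsCocycle {X A : Type*} [AddCommGroup X] [AddCommGroup A] (L : LCS X)
    (f g : X → X → A) : Prop :=
  (∀ x y, g x y = g y x) ∧
  (∀ x y z, g x y + g (x + y) z = g y z + g x (y + z)) ∧
  (∀ x y z, f (x + y) z = f (L.dot x y) (L.dot x z) + f x z) ∧
  (∀ x y z, f x (y + z) - f x y - f x z = g (L.dot x y) (L.dot x z) - g y z)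

/-- Normalised 2-cocycles, as an additive subgroup of pairs of maps. -/
def Zn {X : Type*} [AddCommGroup X] (L : LCS X) (A : Type*) [AddCommGroup A] :
    AddSubgroup ((X → X → A) × (X → X → A)) where
  carrier := {p | IsCocycle L p.1 p.2 ∧ p.2 0 0 = 0}
  zero_mem' := by
    refine ⟨⟨?_, ?_, ?_, ?_⟩, ?_⟩ <;> intros <;> simp
  add_mem' := by
    rintro p q ⟨⟨hp1, hp2, hp3, hp4⟩, hp5⟩ ⟨⟨hq1, hq2, hq3, hq4⟩, hq5⟩
    refine ⟨⟨?_, ?_, ?_, ?_⟩, ?_⟩ <;> intros <;>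
      simp only [Prod.fst_add, Prod.snd_add, Pi.add_apply]
    · rw [hp1, hq1]
    · rw [show ∀ a b c d : A, a + b + (c + d) = (a + c) + (b + d) by intros; abel,
        hp2, hq2]; abel
    · rw [hp3, hq3]; abel
    · rw [show ∀ a b c d e h : A, a + b - (c + d) - (e + h) = (a - c - e) + (b - d - h)
        by intros; abel, hp4, hq4]; abel
    · rw [hp5, hq5]; simp
  neg_mem' := by
    rintro p ⟨⟨hp1, hp2, hp3, hp4⟩, hp5⟩
    refine ⟨⟨?_, ?_, ?_, ?_⟩, ?_⟩ <;> intros <;>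
      simp only [Prod.fst_neg, Prod.snd_neg, Pi.neg_apply]
    · rw [hp1]
    · rw [show ∀ a b : A, -a + -b = -(a + b) by intros; abel, hp2]; abel
    · rw [hp3]; abel
    · rw [show ∀ a b c : A, -a - -b - -c = -(a - b - c) by intros; abel, hp4]; abel
    · rw [hp5]; simp

/-- Normalised 2-coboundaries. -/
def Bn {X : Type*} [AddCommGroup X] (L : LCS X) (A : Type*) [AddCommGroup A] :
    AddSubgroup ((X → X → A) × (X → X → A)) where
  carrier := {p | ∃ l : X → A, l 0 = 0 ∧ (∀ x y, p.1 x y = l (L.dot x y) - l y) ∧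
      (∀ x y, p.2 x y = l (x + y) - l x - l y)}
  zero_mem' := ⟨0, by simp⟩
  add_mem' := by
    rintro p q ⟨l, hl0, hl1, hl2⟩ ⟨m, hm0, hm1, hm2⟩
    refine ⟨l + m, by simp [hl0, hm0], fun x y => ?_, fun x y => ?_⟩ <;>
      simp only [Prod.fst_add, Prod.snd_add, Pi.add_apply, hl1, hm1, hl2, hm2] <;> abel
  neg_mem' := by
    rintro p ⟨l, hl0, hl1, hl2⟩
    refine ⟨-l, by simp [hl0], fun x y => ?_, fun x y => ?_⟩ <;>
      simp only [Prod.fst_neg, Prod.snd_neg, Pi.neg_apply, hl1, hl2] <;> abel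

/-- The second normalised linear cycle set cohomology group. -/
abbrev H2N {X : Type*} [AddCommGroup X] (L : LCS X) (A : Type*) [AddCommGroup A] :=
  Zn L A ⧸ (Bn L A).addSubgroupOf (Zn L A)

/-- Symmetric group 2-cocycles of the abelian group `X` with trivial coefficients `A`. -/
def Zsym (X : Type*) [AddCommGroup X] (A : Type*) [AddCommGroup A] :
    AddSubgroup (X → X → A) where
  carrier := {g | (∀ x y, g x y = g y x) ∧
      ∀ x y z, g x y + g (x + y) z = g y z + g x (y + z)}
  zero_mem' := by refine ⟨?_, ?_⟩ <;> intros <;> simp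
  add_mem' := by
    rintro p q ⟨hp1, hp2⟩ ⟨hq1, hq2⟩
    refine ⟨?_, ?_⟩ <;> intros <;> simp only [Pi.add_apply]
    · rw [hp1, hq1]
    · rw [show ∀ a b c d : A, a + b + (c + d) = (a + c) + (b + d) by intros; abel,
        hp2, hq2]; abel
  neg_mem' := by
    rintro p ⟨hp1, hp2⟩
    refine ⟨?_, ?_⟩ <;> intros <;> simp only [Pi.neg_apply]
    · rw [hp1]
    · rw [show ∀ a b : A, -a + -b = -(a + b) by intros; abel, hp2]; abel

/-- Symmetric group 2-coboundaries. -/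
def Bsym (X : Type*) [AddCommGroup X] (A : Type*) [AddCommGroup A] :
    AddSubgroup (X → X → A) where
  carrier := {g | ∃ l : X → A, ∀ x y, g x y = l (x + y) - l x - l y}
  zero_mem' := ⟨0, by simp⟩
  add_mem' := by
    rintro p q ⟨l, hl⟩ ⟨m, hm⟩
    exact ⟨l + m, fun x y => by simp only [Pi.add_apply, hl, hm]; abel⟩
  neg_mem' := by
    rintro p ⟨l, hl⟩
    exact ⟨-l, fun x y => by simp only [Pi.neg_apply, hl]; abel⟩

/-- The second symmetric cohomology group of an abelian group. -/
abbrev H2sym (X : Type*) [AddCommGroup X] (A : Type*) [AddCommGroup A] :=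
  Zsym X A ⧸ (Bsym X A).addSubgroupOf (Zsym X A)

/-- The multiplicative group structure that `AddAut` carried in the older Mathlib. -/
instance AddAut.groupOld (M : Type*) [Add M] : Group (AddAut M) where
  mul g h := AddEquiv.trans h g
  one := AddEquiv.refl _
  inv := AddEquiv.symm
  mul_assoc _ _ _ := rfl
  one_mul _ := rfl
  mul_one _ := rfl
  inv_mul_cancel := AddEquiv.self_trans_symm

@[simp]
theorem AddAut.mul_apply_old {M : Type*} [Add M] (e₁ e₂ : AddAut M) (m : M) :
    (e₁ * e₂) m = e₁ (e₂ m) := rfl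

@[simp]
theorem AddAut.one_apply_old {M : Type*} [Add M] (m : M) : (1 : AddAut M) m = m := rfl

@[simp]
theorem AddAut.inv_apply_self_old {M : Type*} [Add M] (e : AddAut M) (m : M) :
    e⁻¹ (e m) = m := AddEquiv.symm_apply_apply _ _

@[simp]
theorem AddAut.apply_inv_self_old {M : Type*} [Add M] (e : AddAut M) (m : M) :
    e (e⁻¹ m) = m := AddEquiv.apply_symm_apply _ _

/-- Linear cycle set automorphisms, as a subgroup of the additive automorphisms. -/
def LCSAut {X : Type*} [AddCommGroup X] (L : LCS X) : Subgroup (AddAut X) where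
  carrier := {φ | ∀ x y, φ (L.dot x y) = L.dot (φ x) (φ y)}
  one_mem' := by intro x y; rfl
  mul_mem' := by
    intro a b ha hb x y
    simp only [AddAut.mul_apply_old]
    rw [hb x y, ha]
  inv_mem' := by
    intro a ha x y
    apply a.injective
    rw [ha]
    simp

/-- The transported pair of maps under a pair of automorphisms. -/
def transport {X A : Type*} [AddCommGroup X] [AddCommGroup A]
    (φ : AddAut X) (θ : AddAut A) (p : (X → X → A) × (X → X → A)) :
    (X → X → A) × (X → X → A) :=
  (fun x y => θ (p.1 (φ⁻¹ x) (φ⁻¹ y)), fun x y => θ (p.2 (φ⁻¹ x) (φ⁻¹ y)))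

/-- Addition on the extension `X ⊕_{f,g} A`. -/
def addE {X A : Type*} [AddCommGroup X] [AddCommGroup A] (g : X → X → A)
    (p q : X × A) : X × A :=
  (p.1 + q.1, p.2 + q.2 + g p.1 q.1)

/-- Cycle set operation on the extension `X ⊕_{f,g} A`. -/
def dotE {X A : Type*} [AddCommGroup X] [AddCommGroup A] (L : LCS X) (f : X → X → A)
    (p q : X × A) : X × A :=
  (L.dot p.1 q.1, q.2 + f p.1 q.1)

/-- Normalised 1-cocycles. -/
def Z1 {X : Type*} [AddCommGroup X] (L : LCS X) (A : Type*) [AddCommGroup A] :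
    AddSubgroup (X → A) where
  carrier := {l | (∀ x y, l (x + y) = l x + l y) ∧ ∀ x y, l (L.dot x y) = l y}
  zero_mem' := by refine ⟨?_, ?_⟩ <;> intros <;> simp
  add_mem' := by
    rintro p q ⟨hp1, hp2⟩ ⟨hq1, hq2⟩
    refine ⟨?_, ?_⟩ <;> intros <;> simp only [Pi.add_apply, hp1, hq1, hp2, hq2] <;> abel
  neg_mem' := by
    rintro p ⟨hp1, hp2⟩
    refine ⟨?_, ?_⟩ <;> intros <;> simp only [Pi.neg_apply, hp1, hp2] <;> abel

theorem Equiv.Perm.apply_inv_self_old {α : Type*} (e : Equiv.Perm α) (x : α) : e (e⁻¹ x) = x :=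
  Equiv.apply_symm_apply _ _

/-- The subgroup `Aut_A(E)` of the permutation group of `E = X ⊕_{f,g} A`. -/
def AutAE {X A : Type*} [AddCommGroup X] [AddCommGroup A] (L : LCS X)
    (f g : X → X → A) : Subgroup (Equiv.Perm (X × A)) where
  carrier := {ψ | (∀ p q, ψ (addE g p q) = addE g (ψ p) (ψ q)) ∧
      (∀ p q, ψ (dotE L f p q) = dotE L f (ψ p) (ψ q)) ∧
      ∃ φ ∈ LCSAut L, ∃ θ : AddAut A, ∃ l : X → A, ∀ x a, ψ (x, a) = (φ x, l x + θ a)}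
  one_mem' := by
    refine ⟨fun p q => rfl, fun p q => rfl, 1, one_mem _, 1, 0, fun x a => by simp⟩
  mul_mem' := by
    rintro a b ⟨ha1, ha2, φa, hφa, θa, la, ha3⟩ ⟨hb1, hb2, φb, hφb, θb, lb, hb3⟩
    refine ⟨fun p q => ?_, fun p q => ?_, φa * φb, mul_mem hφa hφb, θa * θb,
      fun x => la (φb x) + θa (lb x), fun x a => ?_⟩
    · simp only [Equiv.Perm.mul_apply, hb1, ha1]
    · simp only [Equiv.Perm.mul_apply, hb2, ha2]
    · simp only [Equiv.Perm.mul_apply, hb3, ha3, AddAut.mul_apply_old, map_add]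
      abel_nf
  inv_mem' := by
    rintro ψ ⟨h1, h2, φ, hφ, θ, l, h3⟩
    refine ⟨fun p q => ?_, fun p q => ?_, φ⁻¹, inv_mem hφ, θ⁻¹,
      fun x => -θ⁻¹ (l (φ⁻¹ x)), fun x a => ?_⟩
    · apply ψ.injective
      simp only [Equiv.Perm.apply_inv_self_old, h1, Equiv.Perm.apply_inv_self_old]
    · apply ψ.injective
      simp only [Equiv.Perm.apply_inv_self_old, h2, Equiv.Perm.apply_inv_self_old]
    · apply ψ.injective
      rw [Equiv.Perm.apply_inv_self_old, h3]
      simp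

/-- A predicate packaging the linear cycle set axioms for a pair of binary operations. -/
structure IsLCSOps {Y : Type*} (add : Y → Y → Y) (dot : Y → Y → Y) : Prop where
  add_assoc : ∀ a b c, add (add a b) c = add a (add b c)
  add_comm : ∀ a b, add a b = add b a
  zero_exists : ∃ e, (∀ a, add e a = a) ∧ ∀ a, ∃ b, add a b = e
  bij : ∀ a, Function.Bijective (dot a)
  cyc : ∀ a b c, dot (dot a b) (dot a c) = dot (dot b a) (dot b c)
  dot_add : ∀ a b c, dot a (add b c) = add (dot a b) (dot a c)
  add_dot : ∀ a b c, dot (add a b) c = dot (dot a b) (dot a c)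

/-- The trivial linear cycle set on an abelian group. -/
def trivLCS (X : Type*) [AddCommGroup X] : LCS X where
  dot := fun _ y => y
  bij := fun _ => Function.bijective_id
  cyc := fun _ _ _ => rfl
  dot_add := fun _ _ _ => rfl
  add_dot := fun _ _ _ => rfl

namespace AutAE

variable {X A : Type*} [AddCommGroup X] [AddCommGroup A]

def shear (φ : AddAut X) (θ : AddAut A) (l : X → A) : Equiv.Perm (X × A) where
  toFun p := (φ p.1, l p.1 + θ p.2)
  invFun p := (φ⁻¹ p.1, θ⁻¹ (p.2 - l (φ⁻¹ p.1)))
  left_inv p := by simp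
  right_inv p := by simp

@[simp]
lemma shear_apply (φ : AddAut X) (θ : AddAut A) (l : X → A) (x : X) (a : A) :
    shear φ θ l (x, a) = (φ x, l x + θ a) := rfl

lemma shear_one_one_zero : shear (1 : AddAut X) (1 : AddAut A) 0 = 1 := by
  ext ⟨x, a⟩ <;> simp

lemma shear_mul_shear (φ φ' : AddAut X) (θ θ' : AddAut A) (l l' : X → A) :
    shear φ θ l * shear φ' θ' l' = shear (φ * φ') (θ * θ') (fun x => l (φ' x) + θ (l' x)) := by
  ext ⟨x, a⟩ <;> simp [add_assoc]

lemma eq_of_shear_eq_shear {φ φ' : AddAut X} {θ θ' : AddAut A} {l l' : X → A}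
    (h : shear φ θ l = shear φ' θ' l') : φ = φ' ∧ θ = θ' ∧ l = l' := by
  have hx (x : X) (a : A) := congrArg (· (x, a)) h
  simp only [shear_apply, Prod.mk.injEq] at hx
  have hl : l = l' := funext fun x => by simpa using (hx x 0).2
  refine ⟨AddEquiv.ext fun x => (hx x 0).1, AddEquiv.ext fun a => ?_, hl⟩
  simpa [hl] using (hx 0 a).2

variable {L : LCS X} {f g : X → X → A}

lemma exists_eq_shear (ψ : AutAE L f g) :
    ∃ φ ∈ LCSAut L, ∃ θ : AddAut A, ∃ l : X → A, (ψ : Equiv.Perm (X × A)) = shear φ θ l := by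
  obtain ⟨φ, hφ, θ, l, h⟩ := ψ.2.2.2
  exact ⟨φ, hφ, θ, l, Equiv.ext fun ⟨x, a⟩ => h x a⟩

lemma shear_mem_iff {φ : AddAut X} (hφ : φ ∈ LCSAut L) (θ : AddAut A) (l : X → A) :
    shear φ θ l ∈ AutAE L f g ↔
      (∀ u v, l (u + v) + θ (g u v) = l u + l v + g (φ u) (φ v)) ∧
      (∀ u v, l (L.dot u v) + θ (f u v) = l v + f (φ u) (φ v)) := by
  constructor
  · rintro ⟨hadd, hdot, -⟩
    refine ⟨fun u v => ?_, fun u v => ?_⟩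
    · simpa [addE] using congrArg Prod.snd (hadd (u, 0) (v, 0))
    · simpa [dotE] using congrArg Prod.snd (hdot (u, 0) (v, 0))
  · rintro ⟨hg, hf⟩
    refine ⟨fun ⟨u, a⟩ ⟨v, b⟩ => ?_, fun ⟨u, a⟩ ⟨v, b⟩ => ?_, φ, hφ, θ, l, fun _ _ => rfl⟩
    · simp only [addE, shear_apply, map_add, Prod.mk.injEq, true_and]
      linear_combination (norm := abel) hg u v
    · simp only [dotE, shear_apply, map_add, Prod.mk.injEq, hφ u v, true_and]
      linear_combination (norm := abel) hf u v

lemma shear_one_mem_iff (l : X → A) : shear 1 1 l ∈ AutAE L f g ↔ l ∈ Z1 L A := by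
  simp [shear_mem_iff (one_mem (LCSAut L)), Z1]

noncomputable def proj (ψ : AutAE L f g) : LCSAut L × AddAut A :=
  (⟨(exists_eq_shear ψ).choose, (exists_eq_shear ψ).choose_spec.1⟩,
    (exists_eq_shear ψ).choose_spec.2.choose)

lemma exists_eq_shear_proj (ψ : AutAE L f g) :
    ∃ l, (ψ : Equiv.Perm (X × A)) = shear ((proj ψ).1 : AddAut X) (proj ψ).2 l :=
  (exists_eq_shear ψ).choose_spec.2.choose_spec

lemma proj_eq_of_eq_shear {ψ : AutAE L f g} {φ : AddAut X} (hφ : φ ∈ LCSAut L) {θ : AddAut A}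
    {l : X → A} (h : (ψ : Equiv.Perm (X × A)) = shear φ θ l) : proj ψ = (⟨φ, hφ⟩, θ) := by
  obtain ⟨l', h'⟩ := exists_eq_shear_proj ψ
  obtain ⟨hφ', hθ', -⟩ := eq_of_shear_eq_shear (h'.symm.trans h)
  exact Prod.ext (Subtype.ext hφ') hθ'

noncomputable def projHom : AutAE L f g →* LCSAut L × AddAut A where
  toFun := proj
  map_one' := proj_eq_of_eq_shear (one_mem _) shear_one_one_zero.symm
  map_mul' ψ₁ ψ₂ := by
    obtain ⟨l₁, h₁⟩ := exists_eq_shear_proj ψ₁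
    obtain ⟨l₂, h₂⟩ := exists_eq_shear_proj ψ₂
    exact proj_eq_of_eq_shear (mul_mem (proj ψ₁).1.2 (proj ψ₂).1.2)
      (by rw [Subgroup.coe_mul, h₁, h₂, shear_mul_shear])

lemma mem_range_projHom_iff (p : LCSAut L × AddAut A) :
    p ∈ Set.range (projHom (L := L) (f := f) (g := g)) ↔
      ∃ l : X → A, shear (p.1 : AddAut X) p.2 l ∈ AutAE L f g := by
  refine ⟨?_, fun ⟨l, hl⟩ => ⟨⟨_, hl⟩, proj_eq_of_eq_shear p.1.2 rfl⟩⟩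
  rintro ⟨ψ, rfl⟩
  obtain ⟨l, hl⟩ := exists_eq_shear_proj ψ
  exact ⟨l, hl ▸ ψ.2⟩

def ofZ1 : Multiplicative (Z1 L A) →* AutAE L f g where
  toFun l := ⟨shear 1 1 l.toAdd, (shear_one_mem_iff _).2 l.toAdd.2⟩
  map_one' := Subtype.ext shear_one_one_zero
  map_mul' l m := Subtype.ext <| by
    simp only [Subgroup.coe_mul, shear_mul_shear, mul_one]
    rfl

lemma ofZ1_apply (l : Z1 L A) (x : X) (a : A) :
    ((ofZ1 (Multiplicative.ofAdd l) : AutAE L f g) : Equiv.Perm (X × A)) (x, a) =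
      (x, (l : X → A) x + a) := rfl

lemma ofZ1_injective : Function.Injective (ofZ1 (L := L) (f := f) (g := g)) := fun _ _ h =>
  Multiplicative.toAdd.injective <| Subtype.ext (eq_of_shear_eq_shear congr($h.1)).2.2

lemma range_ofZ1 : (ofZ1 (L := L) (f := f) (g := g)).range = (projHom (L := L)).ker := by
  ext ψ
  refine ⟨?_, fun h => ?_⟩
  · rintro ⟨l, rfl⟩
    exact proj_eq_of_eq_shear (one_mem _) rfl
  · obtain ⟨l, hl⟩ := exists_eq_shear_proj ψ
    rw [show proj ψ = 1 from h] at hl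
    exact ⟨Multiplicative.ofAdd ⟨l, (shear_one_mem_iff l).1 (hl ▸ ψ.2)⟩, Subtype.ext hl.symm⟩

end AutAE

section Transport

variable {X A : Type*} [AddCommGroup X] [AddCommGroup A] {L : LCS X}

lemma transport_mem_Zn {p : (X → X → A) × (X → X → A)} (hp : p ∈ Zn L A) {φ : AddAut X}
    (hφ : φ ∈ LCSAut L) (θ : AddAut A) : transport φ θ p ∈ Zn L A := by
  obtain ⟨⟨hsymm, hassoc, hf_add, hf_dot⟩, hnorm⟩ := hp
  have hφ' : ∀ x y, φ⁻¹ (L.dot x y) = L.dot (φ⁻¹ x) (φ⁻¹ y) := inv_mem hφ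
  refine ⟨⟨fun x y => ?_, fun x y z => ?_, fun x y z => ?_, fun x y z => ?_⟩, ?_⟩ <;>
    simp only [transport, map_add, hφ', map_zero]
  · rw [hsymm]
  · rw [← map_add, hassoc, map_add]
  · rw [hf_add, map_add]
  · rw [← map_sub, ← map_sub, hf_dot, map_sub]
  · rw [hnorm, map_zero]

lemma sub_transport_mem_Bn_iff {f g : X → X → A} (hnorm : g 0 0 = 0) {φ : AddAut X}
    (hφ : φ ∈ LCSAut L) (θ : AddAut A) :
    (f, g) - transport φ θ (f, g) ∈ Bn L A ↔ ∃ l : X → A, AutAE.shear φ θ l ∈ AutAE L f g := by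
  have hφ' : ∀ x y, φ⁻¹ (L.dot x y) = L.dot (φ⁻¹ x) (φ⁻¹ y) := inv_mem hφ
  simp only [AutAE.shear_mem_iff hφ]
  change (∃ m : X → A, m 0 = 0 ∧
      (∀ x y, f x y - θ (f (φ⁻¹ x) (φ⁻¹ y)) = m (L.dot x y) - m y) ∧
      ∀ x y, g x y - θ (g (φ⁻¹ x) (φ⁻¹ y)) = m (x + y) - m x - m y) ↔ _
  constructor
  · rintro ⟨m, -, hf_cob, hg_cob⟩
    refine ⟨fun x => m (φ x), fun u v => ?_, fun u v => ?_⟩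
    · linear_combination (norm := (simp only [map_add, AddAut.inv_apply_self_old]; abel))
        -hg_cob (φ u) (φ v)
    · linear_combination (norm := (simp only [hφ u v, AddAut.inv_apply_self_old]; abel))
        -hf_cob (φ u) (φ v)
  · rintro ⟨l, hl_add, hl_dot⟩
    refine ⟨fun x => l (φ⁻¹ x), ?_, fun x y => ?_, fun x y => ?_⟩
    · simpa [hnorm] using hl_add 0 0
    · linear_combination (norm := (simp only [hφ', AddAut.apply_inv_self_old]; abel))
        -hl_dot (φ⁻¹ x) (φ⁻¹ y)
    · linear_combination (norm := (simp only [map_add, AddAut.apply_inv_self_old]; abel))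
        -hl_add (φ⁻¹ x) (φ⁻¹ y)

variable {f g : X → X → A} (hfg : (f, g) ∈ Zn L A)

def wellsObstruction (p : LCSAut L × AddAut A) : H2N L A :=
  QuotientAddGroup.mk (⟨(f, g), hfg⟩ : Zn L A) -
    QuotientAddGroup.mk ⟨transport (p.1 : AddAut X) p.2 (f, g), transport_mem_Zn hfg p.1.2 p.2⟩

lemma wellsObstruction_eq_zero_iff (p : LCSAut L × AddAut A) :
    wellsObstruction hfg p = 0 ↔
      ∃ l : X → A, AutAE.shear (p.1 : AddAut X) p.2 l ∈ AutAE L f g := by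
  rw [wellsObstruction, ← QuotientAddGroup.mk_sub, QuotientAddGroup.eq_zero_iff,
    AddSubgroup.mem_addSubgroupOf]
  exact sub_transport_mem_Bn_iff hfg.2 p.1.2 p.2

end Transport

/-- the Wells type exact sequence for linear cycle sets -/
theorem wells_exact_sequence {X A : Type*} [AddCommGroup X] [AddCommGroup A]
    (L : LCS X) (f g : X → X → A) (hfg : (f, g) ∈ Zn L A) :
    ∃ (ι : Multiplicative (Z1 L A) →* AutAE L f g)
      (Ψ : AutAE L f g →* ↥(LCSAut L) × AddAut A)
      (Θ : ↥(LCSAut L) × AddAut A → H2N L A),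
      Function.Injective ι ∧
      (∀ l : Z1 L A, ∀ x a,
        ((ι (Multiplicative.ofAdd l) : Equiv.Perm (X × A))) (x, a) =
          (x, (l : X → A) x + a)) ∧
      (∀ (ψ : AutAE L f g) (φ : AddAut X) (hφ : φ ∈ LCSAut L) (θ : AddAut A)
          (l : X → A),
        (∀ x a, (ψ : Equiv.Perm (X × A)) (x, a) = (φ x, l x + θ a)) →
          Ψ ψ = (⟨φ, hφ⟩, θ)) ∧
      (∀ (φ : LCSAut L) (θ : AddAut A)
          (ht : transport (φ : AddAut X) θ (f, g) ∈ Zn L A),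
        Θ (φ, θ) = (QuotientAddGroup.mk (⟨(f, g), hfg⟩ : Zn L A) : H2N L A) -
          QuotientAddGroup.mk (⟨transport (φ : AddAut X) θ (f, g), ht⟩ : Zn L A)) ∧
      ι.range = Ψ.ker ∧
      Set.range Ψ = Θ ⁻¹' {0} := by
  refine ⟨AutAE.ofZ1, AutAE.projHom, wellsObstruction hfg, AutAE.ofZ1_injective,
    AutAE.ofZ1_apply, fun _ _ hφ _ _ h => AutAE.proj_eq_of_eq_shear hφ (Equiv.ext fun _ => h _ _),
    fun _ _ _ => rfl, AutAE.range_ofZ1, ?_⟩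
  ext p
  rw [AutAE.mem_range_projHom_iff, Set.mem_preimage, Set.mem_singleton_iff,
      wellsObstruction_eq_zero_iff]
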